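/- arXiv:2401.07264 — 2 statements merged into one kernel-verified Lean document; each statement's English description precedes it below -/
import Mathlib

section
/- Let 0 ≤ α < 1 and 0 < c < 2(1-α). Then there exists K* > 0 such that for every K > K*, the function f_α has exactly one positive zero r₀; moreover f_α(s) > 0 for all s ∈ (0, r₀) and f_α(s) < 0 for all s > r₀. -/
/-- The reaction term of the logistic-growth-with-grazing model with
constant harvesting rate `α`: `f_α(s) = s - s²/K - c·s²/(1+s²) - α·s`. -/
noncomputable def fGraze (K c α s : ℝ) : ℝ := s - s ^ 2 / K - c * s ^ 2 / (1 + s ^ 2) - α * s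

/-- Auxiliary factor: `fGraze K c α s = s * gAux K c α s`. -/
noncomputable def gAux (K c α s : ℝ) : ℝ := (1 - α) - s / K - c * s / (1 + s ^ 2)

lemma fGraze_eq_mul (K c α s : ℝ) (hK : K ≠ 0) :
    fGraze K c α s = s * gAux K c α s := by
  have h : (1 : ℝ) + s ^ 2 ≠ 0 := by positivity
  unfold fGraze gAux
  field_simp
  ring

/-- For `0 ≤ α < 1` and `0 < c < 2(1-α)`, there exists `K* > 0` such that for all
`K > K*` the function `f_α` has exactly one positive zero `r₀`, is positive on
`(0, r₀)` and negative on `(r₀, ∞)`. -/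
theorem exists_Kstar_unique_positive_zero (α c : ℝ) (hα₀ : 0 ≤ α) (hα₁ : α < 1)
    (hc₀ : 0 < c) (hc : c < 2 * (1 - α)) :
    ∃ Kstar : ℝ, 0 < Kstar ∧ ∀ K : ℝ, Kstar < K →
      ∃ r₀ : ℝ, 0 < r₀ ∧ fGraze K c α r₀ = 0 ∧
        (∀ s : ℝ, 0 < s → s < r₀ → 0 < fGraze K c α s) ∧
        (∀ s : ℝ, r₀ < s → fGraze K c α s < 0) ∧
        (∀ r : ℝ, 0 < r → fGraze K c α r = 0 → r = r₀) := by
  set β : ℝ := 1 - α - c / 2 with hβdef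
  have hβ : 0 < β := by rw [hβdef]; linarith
  have hβ1 : β < 1 := by rw [hβdef]; linarith
  refine ⟨(c + 1) / β ^ 2, by positivity, ?_⟩
  intro K hK
  have hK0 : 0 < K := lt_trans (by positivity) hK
  have hKne : K ≠ 0 := hK0.ne'
  have hKβ2 : c < K * β ^ 2 := by
    have h1 : c + 1 < K * β ^ 2 := (div_lt_iff₀ (by positivity : (0:ℝ) < β ^ 2)).mp hK
    linarith
  set S : ℝ := K * β with hSdef
  have hS1 : 1 < S := by
    have h1 : 1 / β < (c + 1) / β ^ 2 := by
      rw [div_lt_div_iff₀ hβ (by positivity)]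
      nlinarith
    have h2 : 1 / β < K := lt_trans h1 hK
    have := (div_lt_iff₀ hβ).mp h2
    rw [hSdef]; linarith
  have hS0 : 0 < S := lt_trans one_pos hS1
  have hcK : c * K < S ^ 2 := by
    have h1 : S ^ 2 = K * (K * β ^ 2) := by rw [hSdef]; ring
    nlinarith [mul_lt_mul_of_pos_left hKβ2 hK0]
  -- g is positive on (0, S]
  have gpos : ∀ s : ℝ, 0 < s → s ≤ S → 0 < gAux K c α s := by
    intro s hs hsS
    have hden : (0:ℝ) < 1 + s ^ 2 := by positivity
    rcases lt_or_eq_of_le hsS with h | h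
    · have h2 : c * s / (1 + s ^ 2) ≤ c / 2 := by
        rw [div_le_div_iff₀ hden two_pos]
        nlinarith [sq_nonneg (s - 1)]
      have h3 : s / K < β := by
        rw [div_lt_iff₀ hK0]
        rw [hSdef] at h; linarith
      unfold gAux
      rw [hβdef] at h3
      linarith
    · have h1s : 1 < s := h ▸ hS1
      have h4 : 0 < (s - 1) ^ 2 := pow_pos (by linarith) 2
      have h2 : c * s / (1 + s ^ 2) < c / 2 := by
        rw [div_lt_div_iff₀ hden two_pos]
        nlinarith [mul_pos hc₀ h4]
      have h3 : s / K = β := by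
        rw [h, hSdef, mul_comm, mul_div_assoc, div_self hKne, mul_one]
      unfold gAux
      rw [hβdef] at h3
      linarith
  -- g is strictly decreasing on [S, ∞)
  have ganti : ∀ x y : ℝ, S ≤ x → x < y → gAux K c α y < gAux K c α x := by
    intro x y hx hxy
    have hdx : (0:ℝ) < 1 + x ^ 2 := by positivity
    have hdy : (0:ℝ) < 1 + y ^ 2 := by positivity
    have hx0 : 0 < x := lt_of_lt_of_le hS0 hx
    have hy0 : 0 < y := lt_trans hx0 hxy
    have hxyS : S ^ 2 ≤ x * y := by nlinarith
    have hxyp : 0 < x * y := mul_pos hx0 hy0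
    have hck : c * K < x * y := lt_of_lt_of_le hcK hxyS
    have hbr : 0 < (1 + x ^ 2) * (1 + y ^ 2) + K * c * (1 - x * y) := by
      nlinarith [mul_lt_mul_of_pos_right hck hxyp, mul_pos hK0 hc₀]
    have hdiff : gAux K c α x - gAux K c α y
        = (y - x) * ((1 + x ^ 2) * (1 + y ^ 2) + K * c * (1 - x * y))
          / (K * ((1 + x ^ 2) * (1 + y ^ 2))) := by
      unfold gAux
      field_simp
      ring
    have h5 : 0 < gAux K c α x - gAux K c α y := by
      rw [hdiff]
      exact div_pos (mul_pos (sub_pos.mpr hxy) hbr)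
        (mul_pos hK0 (mul_pos hdx hdy))
    linarith
  -- continuity
  have hcont : Continuous (gAux K c α) := by
    unfold gAux
    have h1 : Continuous fun s : ℝ => c * s / (1 + s ^ 2) :=
      Continuous.div (by fun_prop) (by fun_prop) (fun s => by positivity)
    exact (continuous_const.sub (continuous_id.div_const K)).sub h1
  have gS : 0 < gAux K c α S := gpos S hS0 le_rfl
  have gK : gAux K c α K < 0 := by
    have h1 : gAux K c α K = -α - c * K / (1 + K ^ 2) := by
      unfold gAux; rw [div_self hKne]; ring
    have h2 : 0 < c * K / (1 + K ^ 2) := by positivity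
    linarith
  have hSK : S < K := by nlinarith [mul_lt_mul_of_pos_left hβ1 hK0]
  obtain ⟨r₀, hmem, hr₀⟩ :=
    intermediate_value_Ioo' hSK.le hcont.continuousOn ⟨gK, gS⟩
  have hr₀S : S < r₀ := hmem.1
  have hr₀0 : 0 < r₀ := lt_trans hS0 hr₀S
  refine ⟨r₀, hr₀0, ?_, ?_, ?_, ?_⟩
  · rw [fGraze_eq_mul _ _ _ _ hKne, hr₀, mul_zero]
  · intro s hs hsr
    rw [fGraze_eq_mul _ _ _ _ hKne]
    apply mul_pos hs
    rcases le_or_gt s S with h | h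
    · exact gpos s hs h
    · have := ganti s r₀ h.le hsr
      linarith [hr₀]
  · intro s hsr
    rw [fGraze_eq_mul _ _ _ _ hKne]
    have hg := ganti r₀ s hr₀S.le hsr
    have hs0 : 0 < s := lt_trans hr₀0 hsr
    have hneg : gAux K c α s < 0 := by rw [hr₀] at hg; exact hg
    exact mul_neg_of_pos_of_neg hs0 hneg
  · intro r hr hfr
    rw [fGraze_eq_mul _ _ _ _ hKne] at hfr
    have hgr : gAux K c α r = 0 := by
      rcases mul_eq_zero.mp hfr with h | h
      · exact absurd h hr.ne'
      · exact h
    by_contra hne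
    rcases lt_or_gt_of_ne hne with h | h
    · have hrS : S < r := by
        by_contra hle
        push_neg at hle
        have := gpos r hr hle
        linarith
      have := ganti r r₀ hrS.le h
      rw [hgr, hr₀] at this; exact lt_irrefl 0 this
    · have := ganti r₀ r hr₀S.le h
      rw [hgr, hr₀] at this; exact lt_irrefl 0 this
end

section
/- Let c > 0, 0 < H < 1 and K > 4c/(1-H)². Then for all real numbers a, b with K(1-H)/2 ≤ a ≤ K and K(1-H)/2 ≤ b ≤ K, one has b·(1/K + c(1-ab)/((1+a²)(1+b²))) ≥ (1-H)/2 - 2c/(K(1-H)), and the right-hand side is strictly positive. -/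
/-- Quantitative pointwise lower bound underlying the eigenvalue comparison
lemma: for `c > 0`, `0 < H < 1`, `K > 4c/(1-H)²` and `a, b ∈ [K(1-H)/2, K]`,
`b·(1/K + c(1-ab)/((1+a²)(1+b²))) ≥ (1-H)/2 - 2c/(K(1-H))`, and the right-hand
side is strictly positive. -/
theorem potential_difference_lower_bound (c H K : ℝ) (hc : 0 < c)
    (hH₀ : 0 < H) (hH₁ : H < 1) (hK : 4 * c / (1 - H) ^ 2 < K)
    (a b : ℝ) (ha₁ : K * (1 - H) / 2 ≤ a) (ha₂ : a ≤ K)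
    (hb₁ : K * (1 - H) / 2 ≤ b) (hb₂ : b ≤ K) :
    (1 - H) / 2 - 2 * c / (K * (1 - H)) ≤
      b * (1 / K + c * (1 - a * b) / ((1 + a ^ 2) * (1 + b ^ 2))) ∧
    0 < (1 - H) / 2 - 2 * c / (K * (1 - H)) := by
  have hH : 0 < 1 - H := by linarith
  have hK0 : 0 < K := lt_trans (by positivity) hK
  have hKH : 0 < K * (1 - H) / 2 := by positivity
  have ha0 : 0 < a := lt_of_lt_of_le hKH ha₁
  have hb0 : 0 < b := lt_of_lt_of_le hKH hb₁
  have hP : 0 < (1 + a ^ 2) * (1 + b ^ 2) := by positivity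
  have hpos : 0 < (1 - H) / 2 - 2 * c / (K * (1 - H)) := by
    rw [sub_pos, div_lt_div_iff₀ (by positivity) (by norm_num)]
    have := (div_lt_iff₀ (by positivity : (0:ℝ) < (1 - H) ^ 2)).mp hK
    nlinarith
  refine ⟨?_, hpos⟩
  have h1 : (1 - H) / 2 ≤ b * (1 / K) := by
    rw [mul_one_div, le_div_iff₀ hK0]
    linarith
  have h2 : -(a * (1 + b ^ 2) / ((1 + a ^ 2) * (1 + b ^ 2))) ≤ b * (1 - a * b) / ((1 + a ^ 2) * (1 + b ^ 2)) := by
    rw [neg_le, ← neg_div, div_le_div_iff₀ hP hP]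
    have : -(b * (1 - a * b)) ≤ a * (1 + b ^ 2) := by nlinarith
    nlinarith
  have h3 : a * (1 + b ^ 2) / ((1 + a ^ 2) * (1 + b ^ 2)) ≤ 1 / a := by
    rw [div_le_div_iff₀ hP ha0]
    nlinarith [sq_nonneg a, sq_nonneg b, sq_nonneg (a*b), mul_pos ha0 hb0]
  have h4 : (1 : ℝ) / a ≤ 2 / (K * (1 - H)) := by
    rw [div_le_div_iff₀ ha0 (by positivity)]
    linarith
  have h5 : -(2 * c / (K * (1 - H))) ≤ c * (b * (1 - a * b) / ((1 + a ^ 2) * (1 + b ^ 2))) := by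
    have := mul_le_mul_of_nonneg_left (h2.trans' (neg_le_neg (h3.trans h4))) hc.le
    calc -(2 * c / (K * (1 - H))) = c * (-(2 / (K * (1 - H)))) := by ring
    _ ≤ _ := by exact mul_le_mul_of_nonneg_left (neg_le_neg (h3.trans h4) |>.trans h2) hc.le
  calc (1 - H) / 2 - 2 * c / (K * (1 - H))
      ≤ b * (1 / K) + c * (b * (1 - a * b) / ((1 + a ^ 2) * (1 + b ^ 2))) := by linarith
    _ = b * (1 / K + c * (1 - a * b) / ((1 + a ^ 2) * (1 + b ^ 2))) := by ring
end
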